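/- arXiv:1209.1233 — 3 statements merged into one kernel-verified Lean document; each statement's English description precedes it below -/
import Mathlib

section
/- Let Γ be the line graph of a finite simple connected graph G of order n, and let θ : V → V* be the linear map induced by the symplectic form B of Γ over F₂ (θ(α)(β) = B(α,β)). Then the image θ(V) has dimension n − 1 if n is odd, and dimension n − 2 if n is even. -/
/-!
Over `𝔽₂` the adjacency matrix of the line graph is `Nᵀ N`, where `N` is the vertex-edge incidence
matrix of `G`: the diagonal entries of `Nᵀ N` count the two ends of an edge, hence vanish. For
connected `G`, the kernel of `Nᵀ` is spanned by the all-ones vector `𝟙` and the range of `N`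
consists of the vectors with zero coordinate sum, a space of dimension `n - 1`. Since
`rank (Nᵀ N) = rank N - dim (range N ⊓ ker Nᵀ)`, the rank drops by one more exactly when
`𝟙` has zero coordinate sum, i.e. when `n` is even.
-/

open Matrix

theorem Submodule.finrank_map_add_finrank_inf_ker {K V W : Type*} [DivisionRing K]
    [AddCommGroup V] [Module K V] [AddCommGroup W] [Module K W]
    (f : V →ₗ[K] W) (p : Submodule K V) [FiniteDimensional K p] :
    Module.finrank K (p.map f) + Module.finrank K (p ⊓ LinearMap.ker f : Submodule K V) =
      Module.finrank K p := by
  have := (f.domRestrict p).finrank_range_add_finrank_ker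
  rwa [LinearMap.range_domRestrict, LinearMap.ker_domRestrict, ← Submodule.finrank_map_subtype_eq,
    Submodule.map_comap_subtype] at this

theorem Matrix.finrank_range_toLinearMap₂' {K m n : Type*} [Field K] [Fintype m] [Fintype n]
    [DecidableEq m] [DecidableEq n] (A : Matrix m n K) :
    Module.finrank K (LinearMap.range
      (Matrix.toLinearMap₂' K A : (m → K) →ₗ[K] (n → K) →ₗ[K] K)) = A.rank := by
  have : (Matrix.toLinearMap₂' K A : (m → K) →ₗ[K] (n → K) →ₗ[K] K) =
      (dotProductEquiv K n).toLinearMap ∘ₗ Aᵀ.mulVecLin := by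
    ext x y
    simp [Matrix.toLinearMap₂'_apply']
  rw [this, LinearMap.range_comp, LinearEquiv.finrank_map_eq, ← rank, rank_transpose]

namespace SimpleGraph

theorem Reachable.eq_of_forall_adj {U β : Type*} {G : SimpleGraph U} {x : U → β}
    (hx : ∀ a b, G.Adj a b → x a = x b) {a b : U} (h : G.Reachable a b) : x a = x b := by
  obtain ⟨p⟩ := h
  induction p with
  | nil => rfl
  | cons hadj _ ih => exact (hx _ _ hadj).trans ih

variable {U : Type*} [DecidableEq U] (G : SimpleGraph U) (R : Type*)

/-- `G.incMatrix R` with its columns restricted to the edges of `G`. -/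
def edgeIncMatrix [Zero R] [One R] : Matrix U G.edgeSet R :=
  of fun u e => if u ∈ (e : Sym2 U) then 1 else 0

section Semiring

variable {G} [Semiring R] {a b : U}

theorem edgeIncMatrix_transpose_mk (h : G.Adj a b) :
    (G.edgeIncMatrix R)ᵀ ⟨s(a, b), h⟩ = Pi.single a 1 + Pi.single b 1 := by
  have hab := h.ne
  ext u
  simp only [transpose_apply, edgeIncMatrix, of_apply, Sym2.mem_iff, Pi.add_apply, Pi.single_apply]
  split_ifs <;> subst_vars <;> simp_all

theorem edgeIncMatrix_transpose_mulVec_mk [Fintype U] (h : G.Adj a b) (x : U → R) :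
    ((G.edgeIncMatrix R)ᵀ *ᵥ x) ⟨s(a, b), h⟩ = x a + x b := by
  change (G.edgeIncMatrix R)ᵀ ⟨s(a, b), h⟩ ⬝ᵥ x = _
  rw [edgeIncMatrix_transpose_mk R h, add_dotProduct, single_dotProduct, single_dotProduct, one_mul,
    one_mul]

theorem lineGraph_adjMatrix_eq_transpose_mul [Fintype U] [CharP R 2]
    [DecidableRel G.lineGraph.Adj] :
    G.lineGraph.adjMatrix R = (G.edgeIncMatrix R)ᵀ * G.edgeIncMatrix R := by
  ext ⟨e, he⟩ f
  induction e using Sym2.ind with | _ a b =>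
  -- the `(e, f)` entry of `Nᵀ N` is the `e`-th entry of `Nᵀ` applied to the `f`-th column of `N`
  change _ = ((G.edgeIncMatrix R)ᵀ *ᵥ fun u => G.edgeIncMatrix R u f) ⟨s(a, b), he⟩
  have hboth : a ∈ (f : Sym2 U) ∧ b ∈ (f : Sym2 U) ↔ ⟨s(a, b), he⟩ = f := by
    rw [Sym2.mem_and_mem_iff (G.mem_edgeSet.1 he).ne, Subtype.ext_iff, eq_comm]
  rw [edgeIncMatrix_transpose_mulVec_mk R (G.mem_edgeSet.1 he), adjMatrix_apply]
  simp only [lineGraph_adj_iff_exists, edgeIncMatrix, of_apply, Sym2.mem_iff, exists_eq_or_imp,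
    exists_eq_left]
  by_cases ha : a ∈ (f : Sym2 U) <;> by_cases hb : b ∈ (f : Sym2 U)
  · obtain rfl := hboth.1 ⟨ha, hb⟩
    simp [CharTwo.add_self_eq_zero]
  all_goals simp_all

end Semiring

section CharTwo

variable {G} [CommRing R] [CharP R 2] [Fintype U]

theorem edgeIncMatrix_transpose_mulVec_eq_zero_iff (x : U → R) :
    (G.edgeIncMatrix R)ᵀ *ᵥ x = 0 ↔ ∀ a b, G.Adj a b → x a = x b := by
  refine ⟨fun hx a b h => ?_, fun hx => ?_⟩
  · rw [← CharTwo.add_eq_zero, ← edgeIncMatrix_transpose_mulVec_mk R h, hx, Pi.zero_apply]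
  · ext ⟨e, he⟩
    induction e using Sym2.ind with | _ a b =>
    rw [edgeIncMatrix_transpose_mulVec_mk R (G.mem_edgeSet.1 he), hx a b he,
      CharTwo.add_self_eq_zero, Pi.zero_apply]

theorem ker_edgeIncMatrix_transpose_mulVecLin (hG : G.Preconnected) :
    LinearMap.ker (G.edgeIncMatrix R)ᵀ.mulVecLin = R ∙ (1 : U → R) := by
  ext x
  rw [LinearMap.mem_ker, mulVecLin_apply, edgeIncMatrix_transpose_mulVec_eq_zero_iff,
    Submodule.mem_span_singleton]
  constructor
  · intro hx
    rcases isEmpty_or_nonempty U with _ | ⟨⟨u⟩⟩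
    · exact ⟨0, Subsingleton.elim _ _⟩
    · exact ⟨x u, funext fun v => by simpa using ((hG v u).eq_of_forall_adj hx).symm⟩
  · rintro ⟨c, rfl⟩ a b _
    rfl

theorem single_add_single_mem_range_edgeIncMatrix_mulVecLin [DecidableRel G.Adj] {a b : U}
    (h : G.Reachable a b) :
    Pi.single a 1 + Pi.single b 1 ∈ LinearMap.range (G.edgeIncMatrix R).mulVecLin := by
  obtain ⟨p⟩ := h
  induction p with
  | nil => rw [← Pi.single_add, CharTwo.add_self_eq_zero, Pi.single_zero]; exact zero_mem _
  | @cons u v w hadj _ ih =>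
    have hcol : Pi.single u 1 + Pi.single v 1 ∈ LinearMap.range (G.edgeIncMatrix R).mulVecLin := by
      rw [range_mulVecLin, ← edgeIncMatrix_transpose_mk R hadj]
      exact Submodule.subset_span ⟨_, rfl⟩
    convert add_mem hcol ih using 1
    rw [add_assoc, ← add_assoc (Pi.single v 1), ← Pi.single_add, CharTwo.add_self_eq_zero,
      Pi.single_zero, zero_add]

theorem mem_range_edgeIncMatrix_mulVecLin_iff [DecidableRel G.Adj] (hG : G.Preconnected)
    (x : U → R) :
    x ∈ LinearMap.range (G.edgeIncMatrix R).mulVecLin ↔ ∑ u, x u = 0 := by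
  constructor
  · rintro ⟨y, rfl⟩
    have hone : (G.edgeIncMatrix R)ᵀ *ᵥ 1 = 0 :=
      (edgeIncMatrix_transpose_mulVec_eq_zero_iff R 1).2 fun _ _ _ => rfl
    rw [← one_dotProduct, mulVecLin_apply, dotProduct_mulVec, ← mulVec_transpose, hone,
      zero_dotProduct]
  · intro hx
    rcases isEmpty_or_nonempty U with _ | ⟨⟨u₀⟩⟩
    · rw [Subsingleton.elim x 0]
      exact zero_mem _
    -- the `Pi.single u₀ 1` terms add up to `(∑ u, x u) • Pi.single u₀ 1 = 0`
    have hx' : x = ∑ u, x u • (Pi.single u 1 + Pi.single u₀ 1) := by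
      simp only [smul_add, Finset.sum_add_distrib, ← Finset.sum_smul, hx, zero_smul, add_zero]
      exact pi_eq_sum_univ' x
    rw [hx']
    exact Submodule.sum_mem _ fun u _ => Submodule.smul_mem _ _
      (single_add_single_mem_range_edgeIncMatrix_mulVecLin R (hG u u₀))

end CharTwo

section Field

variable {G} (K : Type*) [Field K] [CharP K 2] [Fintype U] [DecidableRel G.Adj]

theorem finrank_range_edgeIncMatrix_mulVecLin (hG : G.Connected) :
    Module.finrank K (LinearMap.range (G.edgeIncMatrix K).mulVecLin) = Fintype.card U - 1 := by
  have := hG.nonempty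
  have := (G.edgeIncMatrix K)ᵀ.mulVecLin.finrank_range_add_finrank_ker
  rw [ker_edgeIncMatrix_transpose_mulVecLin K hG.preconnected, finrank_span_singleton one_ne_zero,
    Module.finrank_fintype_fun_eq_card, ← rank, rank_transpose, rank] at this
  omega

theorem finrank_range_edgeIncMatrix_mulVecLin_inf_ker (hG : G.Connected) :
    Module.finrank K (LinearMap.range (G.edgeIncMatrix K).mulVecLin ⊓
      LinearMap.ker (G.edgeIncMatrix K)ᵀ.mulVecLin : Submodule K (U → K)) =
      if Even (Fintype.card U) then 1 else 0 := by
  have := hG.nonempty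
  have hone : (1 : U → K) ∈ LinearMap.range (G.edgeIncMatrix K).mulVecLin ↔
      Even (Fintype.card U) := by
    rw [mem_range_edgeIncMatrix_mulVecLin_iff K hG.preconnected, ← one_dotProduct,
      one_dotProduct_one, CharP.cast_eq_zero_iff K 2, even_iff_two_dvd]
  rw [ker_edgeIncMatrix_transpose_mulVecLin K hG.preconnected]
  split_ifs with h
  · rw [inf_eq_right.2 ((Submodule.span_singleton_le_iff_mem _ _).2 (hone.2 h)),
      finrank_span_singleton one_ne_zero]
  · rw [((Submodule.disjoint_span_singleton' one_ne_zero).2 (hone.not.2 h)).eq_bot, finrank_bot]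

theorem rank_edgeIncMatrix_transpose_mul_self (hG : G.Connected) :
    ((G.edgeIncMatrix K)ᵀ * G.edgeIncMatrix K).rank =
      if Even (Fintype.card U) then Fintype.card U - 2 else Fintype.card U - 1 := by
  have := Submodule.finrank_map_add_finrank_inf_ker (G.edgeIncMatrix K)ᵀ.mulVecLin
    (LinearMap.range (G.edgeIncMatrix K).mulVecLin)
  rw [← LinearMap.range_comp, ← mulVecLin_mul, ← rank, finrank_range_edgeIncMatrix_mulVecLin K hG,
    finrank_range_edgeIncMatrix_mulVecLin_inf_ker K hG] at this
  split_ifs at this ⊢ <;> omega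

end Field

end SimpleGraph

/-- If `Γ` is the line graph of a finite simple connected graph `G` of order `n`,
and `θ : V → V*` is induced by the adjacency symplectic form of `Γ` over `F₂`, then the image
of `θ` has dimension `n - 1` if `n` is odd and `n - 2` if `n` is even. -/
theorem stmt1 {U : Type} [Fintype U] [DecidableEq U]
    (G : SimpleGraph U) [DecidableRel G.Adj] (hconn : G.Connected)
    (n : ℕ) (hn : Fintype.card U = n)
    [DecidableRel (SimpleGraph.lineGraph G).Adj] :
    Module.finrank (ZMod 2)
      (LinearMap.range
        (Matrix.toLinearMap₂' (ZMod 2) ((SimpleGraph.lineGraph G).adjMatrix (ZMod 2)) :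
          (G.edgeSet → ZMod 2) →ₗ[ZMod 2] (G.edgeSet → ZMod 2) →ₗ[ZMod 2] ZMod 2)) =
      if Odd n then n - 1 else n - 2 := by
  rw [Matrix.finrank_range_toLinearMap₂', G.lineGraph_adjMatrix_eq_transpose_mul,
    SimpleGraph.rank_edgeIncMatrix_transpose_mul_self _ hconn, hn]
  by_cases h : Even n <;> simp [h]
end

section
/- Let V be a finite-dimensional F₂-vector space with a nondegenerate symplectic form B, let P be a basis of V, and suppose the graph G(P) (with vertex set P and edges {α,β} when B(α,β)=1) is a tree that is not a path. Then at most one neighbor of any vertex of degree ≥ 3 in G(P) is a leaf; in particular, if α ∈ P has two distinct neighbors β, γ that are both leaves of G(P), then β + γ lies in the radical of B, contradicting nondegeneracy. -/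
/-!
If `x` is a leaf of `G(P)` hanging off `i`, then `B (b x) (b m)` is `1` for `m = i` and `0` for
every other basis vector, so the functional `B (b x)` is the coordinate `b.coord i`. Two leaves
at the same vertex therefore have the same functional: their sum is in the radical (over `F₂`),
and by nondegeneracy they coincide.
-/

variable {ι V : Type*} [AddCommGroup V] [Module (ZMod 2) V]
  {B : LinearMap.BilinForm (ZMod 2) V} {b : Module.Basis ι (ZMod 2) V} {G : SimpleGraph ι}

theorem form_basis_leaf_eq_coord (hB : B.IsAlt)
    (hG : ∀ i j : ι, G.Adj i j ↔ i ≠ j ∧ B (b i) (b j) = 1)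
    {i x : ι} [Fintype (G.neighborSet x)] (hx : G.degree x = 1) (hix : G.Adj i x) :
    B (b x) = b.coord i := by
  classical
  refine b.ext fun m => ?_
  rw [b.coord_apply, b.repr_self, Finsupp.single_apply]
  split_ifs with hmi
  · subst hmi
    rw [← hB.neg_eq (b m) (b x), ZMod.neg_eq_self_mod_two]
    exact ((hG _ _).mp hix).2
  · by_cases hmx : m = x
    · subst hmx
      exact hB.self_eq_zero _
    have hne : B (b x) (b m) ≠ 1 := fun h =>
      hmi ((SimpleGraph.degree_eq_one_iff_existsUnique_adj.mp hx).unique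
        ((hG x m).mpr ⟨Ne.symm hmx, h⟩) hix.symm)
    revert hne
    generalize B (b x) (b m) = c
    decide +revert

theorem stmt5_general {V : Type} {ι : Type} [Fintype ι] [AddCommGroup V] [Module (ZMod 2) V]
    (B : LinearMap.BilinForm (ZMod 2) V)
    (halt : ∀ v : V, B v v = 0)
    (hnd : ∀ v : V, (∀ w : V, B v w = 0) → v = 0)
    (b : Module.Basis ι (ZMod 2) V)
    (GP : SimpleGraph ι) [DecidableRel GP.Adj]
    (hGP : ∀ i j : ι, GP.Adj i j ↔ i ≠ j ∧ B (b i) (b j) = 1) :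
    (∀ i : ι, 3 ≤ GP.degree i →
      ∀ j k : ι, GP.Adj i j → GP.Adj i k → GP.degree j = 1 → GP.degree k = 1 → j = k) ∧
    (∀ i j k : ι, GP.Adj i j → GP.Adj i k → GP.degree j = 1 → GP.degree k = 1 → j ≠ k →
      ∀ w : V, B (b j + b k) w = 0) := by
  have leaf_coord {i x : ι} (hx : GP.degree x = 1) (hix : GP.Adj i x) : B (b x) = b.coord i :=
    form_basis_leaf_eq_coord halt hGP hx hix
  refine ⟨fun i _ j k hij hik hj hk => b.injective ?_,
    fun i j k hij hik hj hk _ w => ?_⟩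
  · refine sub_eq_zero.mp (hnd _ fun w => ?_)
    rw [map_sub, leaf_coord hj hij, leaf_coord hk hik, sub_self, LinearMap.zero_apply]
  · rw [map_add, leaf_coord hj hij, leaf_coord hk hik, LinearMap.add_apply,
      CharTwo.add_self_eq_zero]

/-- Let `V` be a finite-dimensional `F₂`-vector space with a nondegenerate
symplectic form `B`, `P` a basis of `V` (indexed by `ι`), and suppose the graph `G(P)`
(vertices `P`, edges where `B = 1`) is a tree that is not a path. Then any vertex of degree
`≥ 3` has at most one leaf neighbor; and whenever `β, γ` are two distinct leaf neighbors of
a common vertex, `b β + b γ` lies in the radical of `B`. -/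
theorem stmt5 {V : Type} {ι : Type} [Fintype ι] [AddCommGroup V] [Module (ZMod 2) V]
    [FiniteDimensional (ZMod 2) V]
    (B : LinearMap.BilinForm (ZMod 2) V)
    (halt : ∀ v : V, B v v = 0)
    (hnd : ∀ v : V, (∀ w : V, B v w = 0) → v = 0)
    (b : Module.Basis ι (ZMod 2) V)
    (GP : SimpleGraph ι) [DecidableRel GP.Adj]
    (hGP : ∀ i j : ι, GP.Adj i j ↔ i ≠ j ∧ B (b i) (b j) = 1)
    (htree : GP.IsTree)
    (hnotpath : ¬ ∃ n : ℕ, Nonempty (GP ≃g SimpleGraph.pathGraph n)) :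
    (∀ i : ι, 3 ≤ GP.degree i →
      ∀ j k : ι, GP.Adj i j → GP.Adj i k → GP.degree j = 1 → GP.degree k = 1 → j = k) ∧
    (∀ i j k : ι, GP.Adj i j → GP.Adj i k → GP.degree j = 1 → GP.degree k = 1 → j ≠ k →
      ∀ w : V, B (b j + b k) w = 0) :=
  stmt5_general B halt hnd b GP hGP
end

section
/- Let Γ = (S,R) be a finite simple connected bipartite nondegenerate graph that is not a path, and suppose some vertex s ∈ S has even degree. Then there exists t ∈ S such that Q(α_t^∨) = 1 and t' ∈ S with Q(α_{t'}^∨) = 0, where Q is the quadratic form with Q(α_u) = 1 for all u ∈ S and polarization B; consequently the restriction of Q to the dual basis {α_u^∨ : u ∈ S} is surjective. -/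
/-!
Let `A` be the adjacency matrix over `𝔽₂`. The dual vectors satisfy `α_t^∨ A = α_t`, so
`∑_{t ∈ N(s)} α_t^∨ = α_s A A⁻¹ = α_s`. Since `Γ` is bipartite, `A⁻¹` (whose rows are the
`α_t^∨`) again vanishes between vertices of the same colour; as all neighbours of `s` have the
same colour, the `α_t^∨` with `t ∈ N(s)` are pairwise `B`-orthogonal and `Q` is additive on them.
Hence `∑_{t ∈ N(s)} Q(α_t^∨) = Q(α_s) = 1`, and an even number of elements of `𝔽₂` summing to `1`
must contain both a `1` and a `0`.
-/

open Matrix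

theorem map_sum_eq_sum_of_pairwise_polar_eq_zero {ι M R : Type*} [AddCommMonoid M]
    [AddCancelCommMonoid R] (Q : M → R) (B : M → M → R)
    (hpolar : ∀ x y, Q (x + y) = Q x + Q y + B x y)
    (hB : ∀ x y z, B x (y + z) = B x y + B x z)
    (f : ι → M) (T : Finset ι) (horth : (T : Set ι).Pairwise fun i j => B (f i) (f j) = 0) :
    Q (∑ i ∈ T, f i) = ∑ i ∈ T, Q (f i) := by
  classical
  have hB0 : ∀ x, B x 0 = 0 := fun x => by simpa using hB x 0 0
  have hQ0 : Q 0 = 0 := by simpa [hB0] using hpolar 0 0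
  induction T using Finset.induction_on with
  | empty => simpa using hQ0
  | insert a T ha ih =>
    have hcross : B (f a) (∑ i ∈ T, f i) = 0 := by
      refine (map_sum (⟨⟨B (f a), hB0 (f a)⟩, hB (f a)⟩ : M →+ R) f T).trans
        (Finset.sum_eq_zero fun i hi => ?_)
      exact horth (by simp) (by simp [hi]) (ne_of_mem_of_not_mem hi ha).symm
    rw [Finset.sum_insert ha, Finset.sum_insert ha, hpolar, hcross, add_zero,
      ih (horth.mono (by simp))]

theorem Bool.eq_of_ne_of_ne {a b c : Bool} (hab : a ≠ b) (hac : a ≠ c) : b = c := by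
  cases a <;> cases b <;> cases c <;> simp_all

theorem ZMod.exists_eq_one_and_exists_eq_zero_of_sum_eq_one {ι : Type*} {T : Finset ι}
    {f : ι → ZMod 2} (hsum : ∑ i ∈ T, f i = 1) (heven : Even T.card) :
    (∃ i ∈ T, f i = 1) ∧ ∃ i ∈ T, f i = 0 := by
  have hcases : ∀ a : ZMod 2, a = 0 ∨ a = 1 := by decide
  constructor
  · by_contra! h
    have : ∑ i ∈ T, f i = 0 := Finset.sum_eq_zero fun i hi => (hcases _).resolve_right (h i hi)
    simp [this] at hsum
  · by_contra! h
    have : ∑ i ∈ T, f i = T.card := by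
      rw [Finset.sum_congr rfl fun i hi => (hcases _).resolve_left (h i hi)]
      simp
    rw [this, (ZMod.natCast_eq_zero_iff_even).2 heven] at hsum
    exact zero_ne_one hsum

/- With `P b` the projection onto the colour class `b`, bipartiteness of `A` reads
`P b * A = A * P (!b)`; conjugating by the inverse gives `E * P b = P (!b) * E`. -/
theorem Matrix.apply_eq_zero_of_mul_eq_one_of_bipartite {n R : Type*} [Fintype n]
    [DecidableEq n] [CommRing R] {A E : Matrix n n R} (c : n → Bool)
    (hA : ∀ i j, c i = c j → A i j = 0) (hEA : E * A = 1) {i j : n} (hij : c i = c j) :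
    E i j = 0 := by
  let P : Bool → Matrix n n R := fun b => diagonal fun k => if c k = b then 1 else 0
  have hPA : ∀ b, P b * A = A * P (!b) := by
    intro b
    ext k l
    by_cases hkl : c k = c l
    · simp [P, hA k l hkl]
    · have : (c k = b) ↔ (c l = !b) := by
        cases b <;> cases hck : c k <;> cases hcl : c l <;> simp [hck, hcl] at hkl ⊢
      simp [P, this]
  have hEP : E * P (c j) = P (!c j) * E := by
    calc E * P (c j) = E * P (c j) * (A * E) := by rw [mul_eq_one_comm.1 hEA, Matrix.mul_one]
      _ = E * A * P (!c j) * E := by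
        rw [← Matrix.mul_assoc, Matrix.mul_assoc E, hPA, ← Matrix.mul_assoc]
      _ = P (!c j) * E := by rw [hEA, Matrix.one_mul]
  simpa [P, hij] using congrFun (congrFun hEP i) j

namespace SimpleGraph

variable {V R : Type*} [Fintype V] [DecidableEq V] (G : SimpleGraph V) [DecidableRel G.Adj]

theorem sum_neighborFinset_single_eq_adjMatrix_row [NonAssocSemiring R] (s : V) :
    ∑ t ∈ G.neighborFinset s, Pi.single t (1 : R) = (G.adjMatrix R).row s := by
  ext j
  simp [Finset.sum_apply, Pi.single_apply, adjMatrix_apply]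

theorem sum_neighborFinset_row_eq_single_of_mul_adjMatrix_eq_one [CommRing R]
    {E : Matrix V V R} (hE : E * G.adjMatrix R = 1) (s : V) :
    ∑ t ∈ G.neighborFinset s, E t = Pi.single s 1 := by
  calc ∑ t ∈ G.neighborFinset s, E t
      = (∑ t ∈ G.neighborFinset s, Pi.single t 1) ᵥ* E := by
        simp only [sum_vecMul, single_one_vecMul]; rfl
    _ = Pi.single s 1 ᵥ* (G.adjMatrix R * E) := by
        rw [sum_neighborFinset_single_eq_adjMatrix_row, ← vecMul_vecMul, single_one_vecMul]
    _ = Pi.single s 1 := by rw [mul_eq_one_comm.1 hE, vecMul_one]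

end SimpleGraph

theorem stmt17_general {S : Type} [Fintype S] [DecidableEq S]
    (Γ : SimpleGraph S) [DecidableRel Γ.Adj]
    (c : S → Bool) (hc : ∀ s t : S, Γ.Adj s t → c s ≠ c t)
    (B : (S → ZMod 2) → (S → ZMod 2) → ZMod 2)
    (hB : ∀ v w, B v w = v ⬝ᵥ (Γ.adjMatrix (ZMod 2)) *ᵥ w)
    (d : S → S → ZMod 2)
    (hd : ∀ s t : S, B (d s) (Pi.single t 1) = if s = t then 1 else 0)
    (Q : (S → ZMod 2) → ZMod 2)
    (hQpolar : ∀ x y : S → ZMod 2, Q (x + y) = Q x + Q y + B x y)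
    (hQone : ∀ u : S, Q (Pi.single u 1) = 1)
    (s : S) (heven : Even (Γ.degree s)) :
    (∃ t : S, Q (d t) = 1) ∧ (∃ t' : S, Q (d t') = 0) := by
  set A := Γ.adjMatrix (ZMod 2)
  have hrow : ∀ t, d t ᵥ* A = Pi.single t 1 := fun t => funext fun u => by
    have h := hd t u
    rw [hB, dotProduct_mulVec, dotProduct_single, mul_one] at h
    simp only [h, Pi.single_apply, eq_comm]
  have hdA : Matrix.of d * A = 1 := by
    ext t u
    change (d t ᵥ* A) u = _
    simp [hrow, Pi.single_apply, one_apply, eq_comm]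
  have horth : ∀ t u, c t = c u → B (d t) (d u) = 0 := fun t u htu => by
    rw [hB, dotProduct_mulVec, hrow, single_dotProduct, one_mul]
    exact apply_eq_zero_of_mul_eq_one_of_bipartite c (fun i j hij => by
      simpa [A, SimpleGraph.adjMatrix_apply] using mt (hc i j) (not_not.2 hij)) hdA htu.symm
  have hsum : ∑ t ∈ Γ.neighborFinset s, d t = Pi.single s 1 :=
    Γ.sum_neighborFinset_row_eq_single_of_mul_adjMatrix_eq_one hdA s
  have hQsum : ∑ t ∈ Γ.neighborFinset s, Q (d t) = 1 := by
    rw [← map_sum_eq_sum_of_pairwise_polar_eq_zero Q B hQpolar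
      (fun x y z => by simp only [hB, mulVec_add, dotProduct_add]),
      hsum, hQone]
    intro t ht u hu _
    simp only [Finset.mem_coe, SimpleGraph.mem_neighborFinset] at ht hu
    exact horth t u (Bool.eq_of_ne_of_ne (hc s t ht) (hc s u hu))
  obtain ⟨⟨t, -, ht⟩, ⟨t', -, ht'⟩⟩ := ZMod.exists_eq_one_and_exists_eq_zero_of_sum_eq_one
    hQsum (by rwa [SimpleGraph.card_neighborFinset_eq_degree])
  exact ⟨⟨t, ht⟩, ⟨t', ht'⟩⟩

/-- Let `Γ` be a finite simple connected bipartite nondegenerate graph that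
is not a path, and suppose some vertex has even degree. Then with `Q` the quadratic form
with `Q(α_u) = 1` for all `u` and polarization `B`, some dual basis vector has `Q`-value 1
and some has `Q`-value 0; i.e. `Q` restricted to the dual basis is surjective. -/
theorem stmt17 {S : Type} [Fintype S] [DecidableEq S]
    (Γ : SimpleGraph S) [DecidableRel Γ.Adj] (hconn : Γ.Connected)
    (c : S → Bool) (hc : ∀ s t : S, Γ.Adj s t → c s ≠ c t)
    (hA : IsUnit (Γ.adjMatrix (ZMod 2)))
    (hnotpath : ¬ ∃ n : ℕ, Nonempty (Γ ≃g SimpleGraph.pathGraph n))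
    (B : (S → ZMod 2) → (S → ZMod 2) → ZMod 2)
    (hB : ∀ v w, B v w = v ⬝ᵥ (Γ.adjMatrix (ZMod 2)) *ᵥ w)
    (d : S → S → ZMod 2)
    (hd : ∀ s t : S, B (d s) (Pi.single t 1) = if s = t then 1 else 0)
    (Q : (S → ZMod 2) → ZMod 2)
    (hQpolar : ∀ x y : S → ZMod 2, Q (x + y) = Q x + Q y + B x y)
    (hQone : ∀ u : S, Q (Pi.single u 1) = 1)
    (s : S) (heven : Even (Γ.degree s)) :
    (∃ t : S, Q (d t) = 1) ∧ (∃ t' : S, Q (d t') = 0) :=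
  stmt17_general Γ c hc B hB d hd Q hQpolar hQone s heven
end
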